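/- Let H, H' : S¹ × ℝ^{2n} → ℝ be smooth, and A, A' : S¹ → Sym(2n) smooth paths of symmetric matrices with sup_{t} |∇H_t(z) − A_t z| = o(|z|) and sup_{t} |∇H'_t(z) − A'_t z| = o(|z|) as |z| → ∞. Suppose all solutions of ẋ = −J₀∇H_t(x) and ẋ = −J₀∇H'_t(x) exist on [0,1], and that the induced time-1 maps of H and H' coincide on all of ℝ^{2n}. Then the time-1 fundamental solution matrices of the linear systems Ṁ(t) = −J₀A_t M(t), M(0) = I, and Ṁ'(t) = −J₀A'_t M'(t), M'(0) = I, are equal: M(1) = M'(1). In other words, the linear map at infinity of a weakly asymptotically linear Hamiltonian diffeomorphism does not depend on the chosen generating weakly asymptotically quadratic Hamiltonian. -/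

import Mathlib

open scoped RealInnerProductSpace

noncomputable section

/-- The standard symplectic matrix `J₀ = [[0, -Iₙ],[Iₙ, 0]]` on `ℝ^{2n} = ℝ^n ⊕ ℝ^n`. -/
def J0 (n : ℕ) : Matrix (Fin n ⊕ Fin n) (Fin n ⊕ Fin n) ℝ :=
  Matrix.fromBlocks 0 (-1) 1 0

/-- The action of a `2n × 2n` real matrix on euclidean space `ℝ^{2n}`. -/
def mv {n : ℕ} (A : Matrix (Fin n ⊕ Fin n) (Fin n ⊕ Fin n) ℝ)
    (z : EuclideanSpace ℝ (Fin n ⊕ Fin n)) : EuclideanSpace ℝ (Fin n ⊕ Fin n) :=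
  Matrix.toEuclideanLin A z

open Set Real

abbrev Esp (n : ℕ) := EuclideanSpace ℝ (Fin n ⊕ Fin n)

def mvL {n : ℕ} (B : Matrix (Fin n ⊕ Fin n) (Fin n ⊕ Fin n) ℝ) : Esp n →L[ℝ] Esp n :=
  LinearMap.toContinuousLinearMap (Matrix.toEuclideanLin B)

lemma mv_eq {n : ℕ} (B : Matrix (Fin n ⊕ Fin n) (Fin n ⊕ Fin n) ℝ) (z : Esp n) :
    mv B z = mvL B z := rfl

lemma mv_mul {n : ℕ} (B C : Matrix (Fin n ⊕ Fin n) (Fin n ⊕ Fin n) ℝ) (z : Esp n) :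
    mv (B * C) z = mv B (mv C z) := by
  simp [mv, Matrix.toEuclideanLin_apply, Matrix.mulVec_mulVec]

lemma mv_neg {n : ℕ} (B : Matrix (Fin n ⊕ Fin n) (Fin n ⊕ Fin n) ℝ) (z : Esp n) :
    mv (-B) z = -(mv B z) := by
  simp [mv]

lemma mv_one {n : ℕ} (z : Esp n) : mv (1 : Matrix (Fin n ⊕ Fin n) (Fin n ⊕ Fin n) ℝ) z = z := by
  simp [mv, Matrix.toEuclideanLin_apply, Matrix.one_mulVec]

lemma mv_sub_arg {n : ℕ} (B : Matrix (Fin n ⊕ Fin n) (Fin n ⊕ Fin n) ℝ) (z w : Esp n) :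
    mv B (z - w) = mv B z - mv B w := by
  simp [mv]

lemma mv_norm_le {n : ℕ} (B : Matrix (Fin n ⊕ Fin n) (Fin n ⊕ Fin n) ℝ) (z : Esp n) :
    ‖mv B z‖ ≤ ‖mvL B‖ * ‖z‖ := (mvL B).le_opNorm z

lemma mvL_cont {n : ℕ} : Continuous fun B : Matrix (Fin n ⊕ Fin n) (Fin n ⊕ Fin n) ℝ => mvL B := by
  exact LinearMap.continuous_of_finiteDimensional
    ((LinearMap.toContinuousLinearMap : (Esp n →ₗ[ℝ] Esp n) ≃ₗ[ℝ] (Esp n →L[ℝ] Esp n)).toLinearMap.comp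
      (Matrix.toEuclideanLin.toLinearMap))


lemma grad_cont {m : Type*} [Fintype m]
    {H : ℝ → EuclideanSpace ℝ m → ℝ}
    (hH : ContDiff ℝ (⊤ : ℕ∞) fun p : ℝ × EuclideanSpace ℝ m => H p.1 p.2) :
    Continuous fun p : ℝ × EuclideanSpace ℝ m => gradient (H p.1) p.2 := by
  set F := fun p : ℝ × EuclideanSpace ℝ m => H p.1 p.2 with hF
  have hfd : ∀ p : ℝ × EuclideanSpace ℝ m, HasFDerivAt (H p.1)
      ((fderiv ℝ F p).comp (ContinuousLinearMap.inr ℝ ℝ (EuclideanSpace ℝ m))) p.2 := by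
    intro p
    have h1 : HasFDerivAt F (fderiv ℝ F (p.1, p.2)) (p.1, p.2) := (hH.differentiable (by simp) _).hasFDerivAt
    exact h1.comp p.2 (hasFDerivAt_prodMk_right (𝕜 := ℝ) p.1 p.2)
  have hgrad : (fun p : ℝ × EuclideanSpace ℝ m => gradient (H p.1) p.2) =
      fun p => (InnerProductSpace.toDual ℝ (EuclideanSpace ℝ m)).symm
        ((fderiv ℝ F p).comp (ContinuousLinearMap.inr ℝ ℝ (EuclideanSpace ℝ m))) := by
    funext p
    exact (hfd p).hasGradientAt.gradient
  rw [hgrad]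
  refine (InnerProductSpace.toDual ℝ (EuclideanSpace ℝ m)).symm.continuous.comp ?_
  exact (hH.continuous_fderiv (by simp)).clm_comp continuous_const

/-- Operator norm bound for a continuous matrix path on `[0,1]`. -/
lemma matnorm {n : ℕ} {A : ℝ → Matrix (Fin n ⊕ Fin n) (Fin n ⊕ Fin n) ℝ}
    (hAc : ∀ i j, Continuous fun t => A t i j) :
    ∃ Ka ≥ (0:ℝ), ∀ t ∈ Icc (0:ℝ) 1, ‖mvL (A t)‖ ≤ Ka := by
  have hA : Continuous A := continuous_pi fun i => continuous_pi fun j => hAc i j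
  have h : Continuous fun t => mvL (A t) := mvL_cont.comp hA
  obtain ⟨C, hC⟩ := isCompact_Icc.exists_bound_of_continuousOn (h.continuousOn (s := Icc (0:ℝ) 1))
  exact ⟨max C 0, le_max_right _ _, fun t ht => (hC t ht).trans (le_max_left _ _)⟩

/-- For every ε, the residual `∇H_t - A_t` is bounded by `ε‖w‖ + C` uniformly on `t ∈ [0,1]`. -/
lemma gradbound {n : ℕ} {H : ℝ → Esp n → ℝ} {A : ℝ → Matrix (Fin n ⊕ Fin n) (Fin n ⊕ Fin n) ℝ}
    (hH : ContDiff ℝ (⊤ : ℕ∞) fun p : ℝ × Esp n => H p.1 p.2)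
    (hAc : ∀ i j, Continuous fun t => A t i j)
    (hsub : ∀ ε > (0 : ℝ), ∃ R > (0 : ℝ), ∀ z : Esp n,
      R < ‖z‖ → ∀ t : ℝ, ‖gradient (H t) z - mv (A t) z‖ ≤ ε * ‖z‖) :
    ∀ ε > (0:ℝ), ∃ C ≥ (0:ℝ), ∀ t ∈ Icc (0:ℝ) 1, ∀ w : Esp n,
      ‖gradient (H t) w - mv (A t) w‖ ≤ ε * ‖w‖ + C := by
  intro ε hε
  obtain ⟨R, hR, hRb⟩ := hsub ε hε
  have hA : Continuous A := continuous_pi fun i => continuous_pi fun j => hAc i j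
  have hcont : Continuous fun p : ℝ × Esp n => gradient (H p.1) p.2 - mv (A p.1) p.2 := by
    refine (grad_cont hH).sub ?_
    have : Continuous fun p : ℝ × Esp n => mvL (A p.1) := (mvL_cont.comp hA).comp continuous_fst
    simpa [mv_eq] using this.clm_apply continuous_snd
  have hcomp : IsCompact ((Icc (0:ℝ) 1) ×ˢ (Metric.closedBall (0 : Esp n) R)) :=
    isCompact_Icc.prod (isCompact_closedBall 0 R)
  obtain ⟨C, hC⟩ := hcomp.exists_bound_of_continuousOn hcont.continuousOn
  refine ⟨max C 0, le_max_right _ _, fun t ht w => ?_⟩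
  rcases le_or_gt ‖w‖ R with hw | hw
  · have := hC (t, w) ⟨ht, by simpa [Metric.mem_closedBall] using hw⟩
    have hnn : 0 ≤ ε * ‖w‖ := mul_nonneg hε.le (norm_nonneg _)
    calc ‖gradient (H t) w - mv (A t) w‖ ≤ C := this
      _ ≤ max C 0 := le_max_left _ _
      _ ≤ ε * ‖w‖ + max C 0 := by linarith
  · exact (hRb w hw t).trans (by simp [le_max_right])

/-- The vector `u t = M t • z` solves the linear ODE. -/
lemma uode {n : ℕ} {A M : ℝ → Matrix (Fin n ⊕ Fin n) (Fin n ⊕ Fin n) ℝ}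
    (hMode : ∀ t ∈ Icc (0:ℝ) 1, ∀ i j, HasDerivWithinAt (fun s => M s i j)
      ((-(J0 n) * A t * M t) i j) (Icc (0:ℝ) 1) t)
    (z : Esp n) {t : ℝ} (ht : t ∈ Icc (0:ℝ) 1) :
    HasDerivWithinAt (fun s => mv (M s) z) (mv (-(J0 n) * A t * M t) z) (Icc (0:ℝ) 1) t := by
  set zv : (Fin n ⊕ Fin n) → ℝ := WithLp.equiv 2 _ z with hzv
  have hpi : HasDerivWithinAt (fun s => Matrix.mulVec (M s) zv) (Matrix.mulVec (-(J0 n) * A t * M t) zv)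
      (Icc (0:ℝ) 1) t := by
    rw [hasDerivWithinAt_pi]
    intro i
    have : HasDerivWithinAt (fun s => ∑ j, M s i j * zv j)
        (∑ j, (-(J0 n) * A t * M t) i j * zv j) (Icc (0:ℝ) 1) t :=
      HasDerivWithinAt.fun_sum fun j _ => (hMode t ht i j).mul_const (zv j)
    simpa [Matrix.mulVec, dotProduct] using this
  exact (PiLp.continuousLinearEquiv 2 ℝ (fun _ : Fin n ⊕ Fin n => ℝ)).symm.toContinuousLinearMap.hasFDerivAt.comp_hasDerivWithinAt t hpi

set_option maxHeartbeats 2000000 in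
lemma key {n : ℕ} {H : ℝ → Esp n → ℝ} {A M : ℝ → Matrix (Fin n ⊕ Fin n) (Fin n ⊕ Fin n) ℝ}
    (hH : ContDiff ℝ (⊤ : ℕ∞) fun p : ℝ × Esp n => H p.1 p.2)
    (hAc : ∀ i j, Continuous fun t => A t i j)
    (hsub : ∀ ε > (0 : ℝ), ∃ R > (0 : ℝ), ∀ z : Esp n, R < ‖z‖ → ∀ t : ℝ,
      ‖gradient (H t) z - mv (A t) z‖ ≤ ε * ‖z‖)
    (hM0 : M 0 = 1)
    (hMode : ∀ t ∈ Icc (0:ℝ) 1, ∀ i j, HasDerivWithinAt (fun s => M s i j)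
      ((-(J0 n) * A t * M t) i j) (Icc (0:ℝ) 1) t) :
    ∀ δ > (0:ℝ), ∃ C ≥ (0:ℝ), ∀ (z : Esp n) (x : ℝ → Esp n), x 0 = z →
      (∀ t ∈ Icc (0:ℝ) 1, HasDerivWithinAt x (-mv (J0 n) (gradient (H t) (x t)))
        (Icc (0:ℝ) 1) t) →
      ‖x 1 - mv (M 1) z‖ ≤ δ * ‖z‖ + C := by
  obtain ⟨Ka, hKa0, hKa⟩ := matnorm hAc
  set KJ := ‖mvL (J0 n)‖ with hKJ
  have hKJ0 : (0:ℝ) ≤ KJ := norm_nonneg _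
  obtain ⟨C1, hC10, hC1⟩ := gradbound hH hAc hsub 1 one_pos
  set K := KJ * (1 + Ka) + 1 with hK
  have hKpos : (0:ℝ) < K := by nlinarith
  set D1 := exp K with hD1
  set D2 := (KJ * C1) / K * (exp K - 1) with hD2
  have hD1pos : (0:ℝ) < D1 := exp_pos _
  have hexpK1 : (1:ℝ) ≤ exp K := one_le_exp hKpos.le
  have hD20 : (0:ℝ) ≤ D2 := by
    apply mul_nonneg (div_nonneg (mul_nonneg hKJ0 hC10) hKpos.le)
    linarith
  -- a priori bound on solutions
  have apriori : ∀ (z : Esp n) (x : ℝ → Esp n), x 0 = z →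
      (∀ t ∈ Icc (0:ℝ) 1, HasDerivWithinAt x (-mv (J0 n) (gradient (H t) (x t)))
        (Icc (0:ℝ) 1) t) →
      ∀ t ∈ Icc (0:ℝ) 1, ‖x t‖ ≤ D1 * ‖z‖ + D2 := by
    intro z x hx0 hode
    have hcont : ContinuousOn x (Icc 0 1) := fun t ht => (hode t ht).continuousWithinAt
    have hode' : ∀ t ∈ Ico (0:ℝ) 1,
        HasDerivWithinAt x (-mv (J0 n) (gradient (H t) (x t))) (Ici t) t := fun t ht =>
      (hode t (Ico_subset_Icc_self ht)).mono_of_mem_nhdsWithin (Icc_mem_nhdsGE_of_mem ht)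
    have hbnd : ∀ t ∈ Ico (0:ℝ) 1,
        ‖-mv (J0 n) (gradient (H t) (x t))‖ ≤ K * ‖x t‖ + KJ * C1 := by
      intro t ht
      have hres := hC1 t (Ico_subset_Icc_self ht) (x t)
      have hAx : ‖mv (A t) (x t)‖ ≤ Ka * ‖x t‖ := by
        refine (mv_norm_le _ _).trans ?_
        exact mul_le_mul_of_nonneg_right (hKa t (Ico_subset_Icc_self ht)) (norm_nonneg _)
      have hg : ‖gradient (H t) (x t)‖ ≤ (1 + Ka) * ‖x t‖ + C1 := by
        have : ‖gradient (H t) (x t)‖ ≤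
            ‖gradient (H t) (x t) - mv (A t) (x t)‖ + ‖mv (A t) (x t)‖ := by
          have := norm_add_le (gradient (H t) (x t) - mv (A t) (x t)) (mv (A t) (x t))
          simpa using this
        nlinarith
      calc ‖-mv (J0 n) (gradient (H t) (x t))‖ = ‖mv (J0 n) (gradient (H t) (x t))‖ := norm_neg _
        _ ≤ KJ * ‖gradient (H t) (x t)‖ := mv_norm_le _ _
        _ ≤ K * ‖x t‖ + KJ * C1 := by nlinarith [norm_nonneg (x t)]
    have hgr := norm_le_gronwallBound_of_norm_deriv_right_le hcont hode'
      (by rw [hx0]) hbnd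
    intro t ht
    have h2 := hgr t ht
    rw [gronwallBound_of_K_ne_0 hKpos.ne'] at h2
    simp only at h2
    have hexp : exp (K * (t - 0)) ≤ exp K := by
      apply exp_le_exp.2; nlinarith [ht.1, ht.2]
    have hexp1 : (1:ℝ) ≤ exp (K * (t - 0)) := one_le_exp (by nlinarith [ht.1])
    have hq : (0:ℝ) ≤ (KJ * C1) / K := div_nonneg (mul_nonneg hKJ0 hC10) hKpos.le
    nlinarith [norm_nonneg z, mul_le_mul_of_nonneg_left hexp (norm_nonneg z),
      mul_le_mul_of_nonneg_left hexp hq]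
  -- comparison with the linear flow
  intro δ hδ
  set K2 := KJ * Ka + 1 with hK2
  have hK21 : (1:ℝ) ≤ K2 := by nlinarith
  have hK2pos : (0:ℝ) < K2 := by linarith
  have hmvJA : ∀ t, ∀ w : Esp n, mv (-(J0 n) * A t) w = -(mv (J0 n) (mv (A t) w)) := by
    intro t w
    rw [neg_mul, mv_neg, mv_mul]
  have hK2bnd : ∀ t ∈ Icc (0:ℝ) 1, ∀ w : Esp n, ‖mv (-(J0 n) * A t) w‖ ≤ K2 * ‖w‖ := by
    intro t ht w
    rw [hmvJA, norm_neg]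
    calc ‖mv (J0 n) (mv (A t) w)‖ ≤ KJ * ‖mv (A t) w‖ := mv_norm_le _ _
      _ ≤ KJ * (Ka * ‖w‖) := by
          refine mul_le_mul_of_nonneg_left ?_ hKJ0
          exact (mv_norm_le _ _).trans (mul_le_mul_of_nonneg_right (hKa t ht) (norm_nonneg _))
      _ ≤ K2 * ‖w‖ := by nlinarith [norm_nonneg w]
  set ε := δ / (exp K2 * KJ * D1 + 1) with hε
  have hεpos : (0:ℝ) < ε := div_pos hδ (by positivity)
  obtain ⟨Cε, hCε0, hCε⟩ := gradbound hH hAc hsub ε hεpos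
  refine ⟨exp K2 * KJ * (ε * D2 + Cε), by positivity, ?_⟩
  intro z x hx0 hode
  set u : ℝ → Esp n := fun t => mv (M t) z with hu
  set y : ℝ → Esp n := fun t => x t - u t with hy
  have hy0 : y 0 = 0 := by simp [hy, hu, hx0, hM0, mv_one]
  have hxbnd := apriori z x hx0 hode
  set F' : ℝ → Esp n := fun t =>
    -mv (J0 n) (gradient (H t) (x t)) - mv (-(J0 n) * A t * M t) z with hF'
  have hyode : ∀ t ∈ Icc (0:ℝ) 1, HasDerivWithinAt y (F' t) (Icc (0:ℝ) 1) t :=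
    fun t ht => (hode t ht).sub (uode hMode z ht)
  have hycont : ContinuousOn y (Icc 0 1) := fun t ht => (hyode t ht).continuousWithinAt
  have hyode' : ∀ t ∈ Ico (0:ℝ) 1, HasDerivWithinAt y (F' t) (Ici t) t := fun t ht =>
    (hyode t (Ico_subset_Icc_self ht)).mono_of_mem_nhdsWithin (Icc_mem_nhdsGE_of_mem ht)
  set ρ := KJ * ε * D1 * ‖z‖ + KJ * (ε * D2 + Cε) with hρ
  have hρ0 : (0:ℝ) ≤ ρ := by positivity
  have hval : ∀ t, F' t =
      mv (-(J0 n) * A t) (y t) - mv (J0 n) (gradient (H t) (x t) - mv (A t) (x t)) := by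
    intro t
    have e1 : mv (-(J0 n) * A t * M t) z = mv (-(J0 n) * A t) (u t) :=
      mv_mul (-(J0 n) * A t) (M t) z
    have e2 : mv (-(J0 n) * A t) (y t) = mv (-(J0 n) * A t) (x t) - mv (-(J0 n) * A t) (u t) :=
      mv_sub_arg _ _ _
    have e4 : mv (J0 n) (gradient (H t) (x t) - mv (A t) (x t)) =
        mv (J0 n) (gradient (H t) (x t)) - mv (J0 n) (mv (A t) (x t)) := mv_sub_arg _ _ _
    simp only [hF']
    rw [e1, e2, e4, hmvJA t (x t)]
    abel
  have hbnd2 : ∀ t ∈ Ico (0:ℝ) 1, ‖F' t‖ ≤ K2 * ‖y t‖ + ρ := by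
    intro t ht
    have ht' := Ico_subset_Icc_self ht
    have hres : ‖gradient (H t) (x t) - mv (A t) (x t)‖ ≤ ε * ‖x t‖ + Cε := hCε t ht' (x t)
    have hxb := hxbnd t ht'
    have h1 : ‖F' t‖ ≤ ‖mv (-(J0 n) * A t) (y t)‖ +
        ‖mv (J0 n) (gradient (H t) (x t) - mv (A t) (x t))‖ := by
      rw [hval t]; exact norm_sub_le _ _
    have h2 := hK2bnd t ht' (y t)
    have h3 : ‖mv (J0 n) (gradient (H t) (x t) - mv (A t) (x t))‖ ≤
        KJ * (ε * ‖x t‖ + Cε) := by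
      refine (mv_norm_le _ _).trans (mul_le_mul_of_nonneg_left hres hKJ0)
    have h4 : ε * ‖x t‖ ≤ ε * (D1 * ‖z‖ + D2) := mul_le_mul_of_nonneg_left hxb hεpos.le
    have : KJ * (ε * ‖x t‖ + Cε) ≤ ρ := by rw [hρ]; nlinarith
    linarith
  have hgr := norm_le_gronwallBound_of_norm_deriv_right_le hycont hyode'
    (show ‖y 0‖ ≤ (0:ℝ) by rw [hy0]; simp) hbnd2 1 (right_mem_Icc.2 zero_le_one)
  rw [gronwallBound_of_K_ne_0 hK2pos.ne'] at hgr
  simp only at hgr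
  have hexp2 : exp (K2 * (1 - 0)) = exp K2 := by norm_num
  rw [hexp2] at hgr
  -- hgr : ‖y 1‖ ≤ 0 * exp K2 + ρ / K2 * (exp K2 - 1)
  have hy1 : y 1 = x 1 - mv (M 1) z := rfl
  rw [hy1] at hgr
  have hee : (1:ℝ) ≤ exp K2 := one_le_exp hK2pos.le
  have hfinal : ρ / K2 * (exp K2 - 1) ≤ exp K2 * ρ := by
    have h5 : ρ / K2 ≤ ρ := by
      rw [div_le_iff₀ hK2pos]; nlinarith
    nlinarith [div_nonneg hρ0 hK2pos.le]
  have hcoef : ε * (exp K2 * KJ * D1) ≤ δ := by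
    rw [hε, div_mul_eq_mul_div, div_le_iff₀ (by positivity)]
    nlinarith [exp_pos K2]
  have hz0 := norm_nonneg z
  calc ‖x 1 - mv (M 1) z‖ ≤ 0 * exp K2 + ρ / K2 * (exp K2 - 1) := hgr
    _ ≤ exp K2 * ρ := by linarith
    _ = (ε * (exp K2 * KJ * D1)) * ‖z‖ + exp K2 * (KJ * (ε * D2 + Cε)) := by rw [hρ]; ring
    _ ≤ δ * ‖z‖ + exp K2 * KJ * (ε * D2 + Cε) := by
        nlinarith [mul_le_mul_of_nonneg_right hcoef hz0]


/-- The linear map at infinity of a weakly asymptotically linear Hamiltonian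
diffeomorphism does not depend on the chosen generating weakly asymptotically quadratic
Hamiltonian: if `H` and `H'` are weakly asymptotically quadratic with quadratic parts
determined by `A` and `A'`, all solutions exist on `[0,1]`, and the time-1 maps of `H` and
`H'` coincide, then the time-1 fundamental solutions of `Ṁ = −J₀A_t M` and `Ṁ' = −J₀A'_t M'`
with `M(0) = M'(0) = I` coincide: `M(1) = M'(1)`. -/
theorem stmt_1 (n : ℕ)
    (H H' : ℝ → EuclideanSpace ℝ (Fin n ⊕ Fin n) → ℝ)
    (A A' : ℝ → Matrix (Fin n ⊕ Fin n) (Fin n ⊕ Fin n) ℝ)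
    (hH : ContDiff ℝ (⊤ : ℕ∞) fun p : ℝ × EuclideanSpace ℝ (Fin n ⊕ Fin n) => H p.1 p.2)
    (hH' : ContDiff ℝ (⊤ : ℕ∞) fun p : ℝ × EuclideanSpace ℝ (Fin n ⊕ Fin n) => H' p.1 p.2)
    (hHper : ∀ t z, H (t + 1) z = H t z)
    (hH'per : ∀ t z, H' (t + 1) z = H' t z)
    (hA : ∀ i j, ContDiff ℝ (⊤ : ℕ∞) fun t => A t i j)
    (hA' : ∀ i j, ContDiff ℝ (⊤ : ℕ∞) fun t => A' t i j)
    (hAper : ∀ t, A (t + 1) = A t)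
    (hA'per : ∀ t, A' (t + 1) = A' t)
    (hAsymm : ∀ t, (A t).IsSymm)
    (hA'symm : ∀ t, (A' t).IsSymm)
    (hsub : ∀ ε > (0 : ℝ), ∃ M > (0 : ℝ), ∀ z : EuclideanSpace ℝ (Fin n ⊕ Fin n),
      M < ‖z‖ → ∀ t : ℝ, ‖gradient (H t) z - mv (A t) z‖ ≤ ε * ‖z‖)
    (hsub' : ∀ ε > (0 : ℝ), ∃ M > (0 : ℝ), ∀ z : EuclideanSpace ℝ (Fin n ⊕ Fin n),
      M < ‖z‖ → ∀ t : ℝ, ‖gradient (H' t) z - mv (A' t) z‖ ≤ ε * ‖z‖)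
    (hexist : ∀ z : EuclideanSpace ℝ (Fin n ⊕ Fin n),
      ∃ x : ℝ → EuclideanSpace ℝ (Fin n ⊕ Fin n), x 0 = z ∧
        ∀ t ∈ Set.Icc (0 : ℝ) 1, HasDerivWithinAt x
          (-mv (J0 n) (gradient (H t) (x t))) (Set.Icc (0 : ℝ) 1) t)
    (hexist' : ∀ z : EuclideanSpace ℝ (Fin n ⊕ Fin n),
      ∃ x : ℝ → EuclideanSpace ℝ (Fin n ⊕ Fin n), x 0 = z ∧
        ∀ t ∈ Set.Icc (0 : ℝ) 1, HasDerivWithinAt x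
          (-mv (J0 n) (gradient (H' t) (x t))) (Set.Icc (0 : ℝ) 1) t)
    -- the induced time-1 maps of `H` and `H'` coincide on all of `ℝ^{2n}`
    (hsametime1 : ∀ z : EuclideanSpace ℝ (Fin n ⊕ Fin n),
      ∀ x x' : ℝ → EuclideanSpace ℝ (Fin n ⊕ Fin n),
        x 0 = z → x' 0 = z →
        (∀ t ∈ Set.Icc (0 : ℝ) 1, HasDerivWithinAt x
          (-mv (J0 n) (gradient (H t) (x t))) (Set.Icc (0 : ℝ) 1) t) →
        (∀ t ∈ Set.Icc (0 : ℝ) 1, HasDerivWithinAt x'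
          (-mv (J0 n) (gradient (H' t) (x' t))) (Set.Icc (0 : ℝ) 1) t) →
        x 1 = x' 1)
    (M M' : ℝ → Matrix (Fin n ⊕ Fin n) (Fin n ⊕ Fin n) ℝ)
    (hM0 : M 0 = 1) (hM'0 : M' 0 = 1)
    (hMode : ∀ t ∈ Set.Icc (0 : ℝ) 1, ∀ i j, HasDerivWithinAt (fun s => M s i j)
      ((-(J0 n) * A t * M t) i j) (Set.Icc (0 : ℝ) 1) t)
    (hM'ode : ∀ t ∈ Set.Icc (0 : ℝ) 1, ∀ i j, HasDerivWithinAt (fun s => M' s i j)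
      ((-(J0 n) * A' t * M' t) i j) (Set.Icc (0 : ℝ) 1) t) :
    M 1 = M' 1 := by
  have hAc : ∀ i j, Continuous fun t => A t i j := fun i j => (hA i j).continuous
  have hA'c : ∀ i j, Continuous fun t => A' t i j := fun i j => (hA' i j).continuous
  have main : ∀ δ > (0:ℝ), ∃ C ≥ (0:ℝ), ∀ z : Esp n,
      ‖mv (M 1) z - mv (M' 1) z‖ ≤ δ * ‖z‖ + C := by
    intro δ hδ
    have hδ2 : (0:ℝ) < δ/2 := by linarith
    obtain ⟨C, hC0, hC⟩ := key hH hAc hsub hM0 hMode (δ/2) hδ2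
    obtain ⟨C', hC'0, hC'⟩ := key hH' hA'c hsub' hM'0 hM'ode (δ/2) hδ2
    refine ⟨C + C', by linarith, fun z => ?_⟩
    obtain ⟨x, hx0, hx⟩ := hexist z
    obtain ⟨x', hx'0, hx'⟩ := hexist' z
    have h1 := hC z x hx0 hx
    have h2 := hC' z x' hx'0 hx'
    have heq := hsametime1 z x x' hx0 hx'0 hx hx'
    have hsplit : mv (M 1) z - mv (M' 1) z
        = -(x 1 - mv (M 1) z) + (x' 1 - mv (M' 1) z) := by rw [heq]; abel
    rw [hsplit]
    calc ‖-(x 1 - mv (M 1) z) + (x' 1 - mv (M' 1) z)‖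
        ≤ ‖-(x 1 - mv (M 1) z)‖ + ‖x' 1 - mv (M' 1) z‖ := norm_add_le _ _
      _ ≤ (δ/2 * ‖z‖ + C) + (δ/2 * ‖z‖ + C') := by rw [norm_neg]; exact add_le_add h1 h2
      _ = δ * ‖z‖ + (C + C') := by ring
  have hzero : ∀ z : Esp n, mv (M 1) z = mv (M' 1) z := by
    intro z
    have hle : ∀ η > (0:ℝ), ‖mv (M 1) z - mv (M' 1) z‖ ≤ η := by
      intro η hη
      set δ := η / (2 * (‖z‖ + 1)) with hδdef
      have hδ : (0:ℝ) < δ := by positivity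
      obtain ⟨C, hC0, hC⟩ := main δ hδ
      set s := 2 * C / η + 1 with hs
      have hspos : (0:ℝ) < s := by positivity
      have hsmul : mv (M 1) (s • z) - mv (M' 1) (s • z)
          = s • (mv (M 1) z - mv (M' 1) z) := by
        simp [mv, smul_sub]
      have h := hC (s • z)
      rw [hsmul, norm_smul, norm_smul, Real.norm_eq_abs, abs_of_pos hspos] at h
      have h1 : δ * ‖z‖ ≤ η / 2 := by
        rw [hδdef, div_mul_eq_mul_div, div_le_div_iff₀ (by positivity) (by norm_num)]
        nlinarith [norm_nonneg z]
      have hsη : s * η = 2 * C + η := by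
        rw [hs]; field_simp
      have hw := norm_nonneg (mv (M 1) z - mv (M' 1) z)
      nlinarith [mul_le_mul_of_nonneg_left h1 hspos.le]
    have h0 : ‖mv (M 1) z - mv (M' 1) z‖ ≤ 0 :=
      le_of_forall_pos_le_add (fun η hη => by simpa using hle η hη)
    have := le_antisymm h0 (norm_nonneg _)
    rwa [norm_eq_zero, sub_eq_zero] at this
  have hlin : Matrix.toEuclideanLin (M 1) = Matrix.toEuclideanLin (M' 1) :=
    LinearMap.ext hzero
  exact Matrix.toEuclideanLin.injective hlin
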